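/- arXiv:2409.03744 — 2 statements merged into one kernel-verified Lean document; each statement's English description precedes it below -/
import Mathlib

section
/- Let V be a unitary operator on a finite-dimensional Hilbert space and let U_1,...,U_m be unitaries with an associated probability distribution p_1,...,p_m. If ‖U_j − V‖ ≤ a (operator norm) for all j, and ‖∑_j p_j U_j − V‖ ≤ b, then the quantum channel Λ(ρ) = ∑_j p_j U_j ρ U_j† satisfies ‖Λ(ρ) − V ρ V†‖₁ ≤ a² + 2b for every density matrix ρ. -/
/-!
With `E j = U j - V` and `F = ∑ j, p j • U j - V`, the identity
`Λ ρ - V ρ Vᴴ = F ρ Vᴴ + V ρ Fᴴ + ∑ j, p j • E j ρ (E j)ᴴ` holds because `∑ j, p j = 1`.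
The left side `H` is Hermitian, so its trace norm is `re tr (W H)` for `W = sign H`, a matrix of
operator norm at most `1`. For positive semidefinite `ρ` one has `|tr (X ρ)| ≤ ‖X‖ tr ρ`, so a term
`B ρ Cᴴ` contributes at most `‖B‖ ‖C‖`, giving `2 b + a ^ 2` in total.
-/

open Matrix
open scoped ComplexOrder

noncomputable def opNorm {n : Type*} [Fintype n] [DecidableEq n] (A : Matrix n n ℂ) : ℝ :=
  ‖Matrix.toEuclideanCLM (𝕜 := ℂ) A‖

/-- The positive semidefinite square root (the definition `Matrix.PosSemidef.sqrt` of the older Mathlib). -/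
noncomputable def Matrix.PosSemidef.sqrt {n : Type*} [Fintype n] [DecidableEq n] {A : Matrix n n ℂ}
    (hA : A.PosSemidef) : Matrix n n ℂ :=
  (hA.1.eigenvectorUnitary : Matrix n n ℂ) * diagonal ((↑) ∘ Real.sqrt ∘ hA.1.eigenvalues) *
    (star hA.1.eigenvectorUnitary : Matrix n n ℂ)

noncomputable def traceNorm {n : Type*} [Fintype n] [DecidableEq n] (A : Matrix n n ℂ) : ℝ :=
  (Matrix.PosSemidef.sqrt (Matrix.posSemidef_conjTranspose_mul_self A)).trace.re

open scoped Matrix.Norms.L2Operator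

lemma CStarRing.norm_le_one_of_mem_unitary {E : Type*} [NormedRing E] [StarRing E] [CStarRing E]
    {U : E} (hU : U ∈ unitary E) : ‖U‖ ≤ 1 := by
  nontriviality E
  exact (norm_of_mem_unitary hU).le

section MixingIdentity

variable {R ι : Type*} [Ring R] [StarRing R] [Algebra ℝ R] [StarModule ℝ R] [Fintype ι]

lemma sum_smul_conj_sub_conj_eq (p : ι → ℝ) (hp : ∑ j, p j = 1) (U : ι → R) (V ρ : R) :
    ∑ j, p j • (U j * ρ * star (U j)) - V * ρ * star V =
      (∑ j, p j • U j - V) * ρ * star V + V * ρ * star (∑ j, p j • U j - V) +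
        ∑ j, p j • ((U j - V) * ρ * star (U j - V)) := by
  have hV : ∑ j, p j • (V * ρ * star V) = V * ρ * star V := by
    rw [← Finset.sum_smul, hp, one_smul]
  simp only [star_sub, star_sum, star_smul, star_trivial, sub_mul, mul_sub, Finset.sum_mul,
    Finset.mul_sum, smul_mul_assoc, mul_smul_comm, smul_sub, Finset.sum_sub_distrib, hV]
  abel

lemma IsSelfAdjoint.sum_smul_conj_sub_conj {ρ : R} (hρ : IsSelfAdjoint ρ) (p : ι → ℝ)
    (U : ι → R) (V : R) :
    IsSelfAdjoint (∑ j, p j • (U j * ρ * star (U j)) - V * ρ * star V) :=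
  (isSelfAdjoint_sum _ fun j _ => (IsSelfAdjoint.all (p j)).smul (hρ.conjugate (U j))).sub
    (hρ.conjugate V)

end MixingIdentity

namespace Matrix

variable {𝕜 : Type*} [RCLike 𝕜] {m n : Type*} [Fintype m] [Fintype n]

lemma norm_entry_le_l2_opNorm [DecidableEq n] (A : Matrix m n 𝕜) (i : m) (j : n) :
    ‖A i j‖ ≤ ‖A‖ := by
  have hentry :
      ((EuclideanSpace.equiv m 𝕜).symm (A *ᵥ EuclideanSpace.single j 1)) i = A i j := by
    change (A *ᵥ Pi.single j 1) i = A i j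
    rw [mulVec_single_one]; rfl
  calc ‖A i j‖ = ‖((EuclideanSpace.equiv m 𝕜).symm (A *ᵥ EuclideanSpace.single j 1)) i‖ := by
        rw [hentry]
    _ ≤ ‖(EuclideanSpace.equiv m 𝕜).symm (A *ᵥ EuclideanSpace.single j 1)‖ :=
        PiLp.norm_apply_le _ _
    _ ≤ ‖A‖ * ‖EuclideanSpace.single j (1 : 𝕜)‖ := l2_opNorm_mulVec A _
    _ = ‖A‖ := by simp

lemma trace_mul_diagonal {R : Type*} [NonUnitalNonAssocSemiring R] [DecidableEq n]
    (M : Matrix n n R) (v : n → R) : (M * diagonal v).trace = ∑ i, M i i * v i := by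
  simp only [trace, diag, mul_diagonal]

variable [DecidableEq n]

lemma PosSemidef.norm_trace_mul_le (X : Matrix n n 𝕜) {ρ : Matrix n n 𝕜} (hρ : ρ.PosSemidef) :
    ‖(X * ρ).trace‖ ≤ ‖X‖ * RCLike.re ρ.trace := by
  set Q := hρ.1.eigenvectorUnitary
  set d := hρ.1.eigenvalues
  have hM : ‖(star Q : Matrix n n 𝕜) * X * Q‖ = ‖X‖ := by
    rw [CStarRing.norm_mul_coe_unitary, ← Unitary.coe_star, CStarRing.norm_coe_unitary_mul]
  have htrace : (X * ρ).trace = ∑ i, ((star Q : Matrix n n 𝕜) * X * Q) i i * d i := by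
    conv_lhs => rw [hρ.1.spectral_theorem, Unitary.conjStarAlgAut_apply, ← mul_assoc, ← mul_assoc,
      trace_mul_comm, ← mul_assoc, ← mul_assoc]
    exact trace_mul_diagonal _ _
  have hre : RCLike.re ρ.trace = ∑ i, d i := by
    simp [hρ.1.trace_eq_sum_eigenvalues, d]
  calc ‖(X * ρ).trace‖ ≤ ∑ i, ‖((star Q : Matrix n n 𝕜) * X * Q) i i‖ * d i := by
        rw [htrace]
        refine (norm_sum_le _ _).trans_eq (Finset.sum_congr rfl fun i _ => ?_)
        rw [norm_mul, RCLike.norm_ofReal, abs_of_nonneg (hρ.eigenvalues_nonneg i)]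
    _ ≤ ∑ i, ‖X‖ * d i := by
        gcongr with i
        · exact hρ.eigenvalues_nonneg i
        · exact hM ▸ norm_entry_le_l2_opNorm _ i i
    _ = ‖X‖ * RCLike.re ρ.trace := by rw [hre, Finset.mul_sum]

lemma PosSemidef.norm_trace_mul_mul_mul_star_le {ρ : Matrix n n 𝕜} (hρ : ρ.PosSemidef)
    {W : Matrix n n 𝕜} (hW : ‖W‖ ≤ 1) (B C : Matrix n n 𝕜) :
    ‖(W * (B * ρ * star C)).trace‖ ≤ ‖B‖ * ‖C‖ * RCLike.re ρ.trace := by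
  have hcycle : (W * (B * ρ * star C)).trace = (star C * W * B * ρ).trace := by
    rw [← mul_assoc, ← mul_assoc, trace_mul_comm, ← mul_assoc, ← mul_assoc]
  have hnorm : ‖star C * W * B‖ ≤ ‖B‖ * ‖C‖ := calc
    ‖star C * W * B‖ ≤ ‖C‖ * ‖W‖ * ‖B‖ := by grw [norm_mul_le, norm_mul_le, norm_star]
    _ ≤ ‖C‖ * 1 * ‖B‖ := by gcongr
    _ = ‖B‖ * ‖C‖ := by ring
  rw [hcycle]
  exact (hρ.norm_trace_mul_le _).trans
    (mul_le_mul_of_nonneg_right hnorm (RCLike.nonneg_iff.mp hρ.trace_nonneg).1)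

lemma traceNorm_eq_re_trace_cfc_abs {H : Matrix n n ℂ} (hH : H.IsHermitian) :
    traceNorm H = (cfc (fun x : ℝ => |x|) H).trace.re := by
  have hsq : Hᴴ * H = cfc (· ^ 2 : ℝ → ℝ) H := by
    rw [hH.eq, cfc_pow_id H 2 hH.isSelfAdjoint, sq]
  have hsqrt :
      PosSemidef.sqrt (posSemidef_conjTranspose_mul_self H) = cfc Real.sqrt (Hᴴ * H) := by
    rw [(posSemidef_conjTranspose_mul_self H).1.cfc_eq]; rfl
  rw [traceNorm, hsqrt, hsq, ← cfc_comp' Real.sqrt (· ^ 2) H]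
  simp only [Real.sqrt_sq_eq_abs]

lemma IsHermitian.exists_norm_le_one_traceNorm_eq_re_trace_mul {H : Matrix n n ℂ}
    (hH : H.IsHermitian) :
    ∃ W : Matrix n n ℂ, ‖W‖ ≤ 1 ∧ traceNorm H = (W * H).trace.re := by
  let sign : ℝ → ℝ := fun x => if x < 0 then -1 else 1
  have hcont : ∀ f : ℝ → ℝ, ContinuousOn f (spectrum ℝ H) :=
    fun f => H.finite_real_spectrum.continuousOn f
  refine ⟨cfc sign H, norm_cfc_le zero_le_one fun x _ => ?_, ?_⟩
  · by_cases hx : x < 0 <;> simp [sign, hx]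
  · have habs : (fun x : ℝ => |x|) = fun x => sign x * x := by
      ext x; by_cases hx : x < 0 <;> simp [sign, hx, abs_of_neg, abs_of_nonneg, le_of_not_gt]
    rw [traceNorm_eq_re_trace_cfc_abs hH, habs, cfc_mul sign (fun x => x) H (hcont _) (hcont _),
      cfc_id' ℝ H]

end Matrix

theorem mixing_lemma_general {N m : ℕ} (V : Matrix (Fin N) (Fin N) ℂ)
    (hV : V ∈ Matrix.unitaryGroup (Fin N) ℂ)
    (U : Fin m → Matrix (Fin N) (Fin N) ℂ)
    (p : Fin m → ℝ) (hp : ∀ j, 0 ≤ p j) (hp1 : ∑ j, p j = 1)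
    (a b : ℝ)
    (ha : ∀ j, opNorm (U j - V) ≤ a)
    (hb : opNorm ((∑ j, (p j : ℂ) • U j) - V) ≤ b)
    (ρ : Matrix (Fin N) (Fin N) ℂ) (hρ : ρ.PosSemidef) (hρ1 : ρ.trace = 1) :
    traceNorm ((∑ j, (p j : ℂ) • (U j * ρ * (U j)ᴴ)) - V * ρ * Vᴴ) ≤ a ^ 2 + 2 * b := by
  simp only [Complex.coe_smul, ← star_eq_conjTranspose] at hb ⊢
  set F := ∑ j, p j • U j - V
  -- `opNorm` is definitionally the (scoped) L2 operator norm `‖·‖` on matrices.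
  have hF : ‖F‖ ≤ b := hb
  have hb0 : 0 ≤ b := (norm_nonneg F).trans hF
  have hH := hρ.isHermitian.isSelfAdjoint.sum_smul_conj_sub_conj p U V
  obtain ⟨W, hW, hWH⟩ := hH.isHermitian.exists_norm_le_one_traceNorm_eq_re_trace_mul
  have hbound (B C : Matrix (Fin N) (Fin N) ℂ) :
      (W * (B * ρ * star C)).trace.re ≤ ‖B‖ * ‖C‖ := by
    simpa [hρ1] using (Complex.re_le_norm _).trans (hρ.norm_trace_mul_mul_mul_star_le hW B C)
  have hsq (j : Fin m) : ‖U j - V‖ * ‖U j - V‖ ≤ a ^ 2 := by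
    rw [sq]; exact mul_self_le_mul_self (norm_nonneg _) (ha j)
  rw [hWH, sum_smul_conj_sub_conj_eq p hp1, mul_add, mul_add, Matrix.mul_sum, trace_add,
    trace_add, trace_sum, Complex.add_re, Complex.add_re, Complex.re_sum]
  simp only [mul_smul_comm, trace_smul, Complex.smul_re, smul_eq_mul]
  calc _ ≤ ‖F‖ * ‖V‖ + ‖V‖ * ‖F‖ + ∑ j, p j * a ^ 2 := by
        gcongr with j
        · exact hbound _ _
        · exact hbound _ _
        · exact hp j
        · exact (hbound _ _).trans (hsq j)
    _ ≤ b * 1 + 1 * b + a ^ 2 := by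
        have hV1 := CStarRing.norm_le_one_of_mem_unitary hV
        rw [← Finset.sum_mul, hp1, one_mul]
        gcongr
    _ = a ^ 2 + 2 * b := by ring

/-- Hastings–Campbell mixing lemma (trace-norm form on a fixed density matrix). -/
theorem mixing_lemma {N m : ℕ} (V : Matrix (Fin N) (Fin N) ℂ)
    (hV : V ∈ Matrix.unitaryGroup (Fin N) ℂ)
    (U : Fin m → Matrix (Fin N) (Fin N) ℂ)
    (hU : ∀ j, U j ∈ Matrix.unitaryGroup (Fin N) ℂ)
    (p : Fin m → ℝ) (hp : ∀ j, 0 ≤ p j) (hp1 : ∑ j, p j = 1)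
    (a b : ℝ)
    (ha : ∀ j, opNorm (U j - V) ≤ a)
    (hb : opNorm ((∑ j, (p j : ℂ) • U j) - V) ≤ b)
    (ρ : Matrix (Fin N) (Fin N) ℂ) (hρ : ρ.PosSemidef) (hρ1 : ρ.trace = 1) :
    traceNorm ((∑ j, (p j : ℂ) • (U j * ρ * (U j)ᴴ)) - V * ρ * Vᴴ) ≤ a ^ 2 + 2 * b :=
  mixing_lemma_general V hV U p hp hp1 a b ha hb ρ hρ hρ1
end

section
/- Let (c_n) be real coefficients with |c_n| ≤ C e^{−qn} for all n ≥ d/2, where C,q > 0 and d ≥ 2 is an integer. Define ε = Ce^{−qd}/(1−e^{−q}) and let d* = ⌈d/2 + log(C)/(2q) − log(1−e^{−q})/(2q)⌉. Then (Ce^{−q d*}/(1−e^{−q}))² ≤ ε, i.e., the degree-d* truncation error squared is at most the degree-d truncation error. -/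
open Real

lemma sq_mul_div_le_of_mul_sq_le {C E F r : ℝ} (hC : 0 ≤ C) (hr : 0 < r)
    (h : C * E ^ 2 ≤ r * F) : (C * E / r) ^ 2 ≤ C * F / r :=
  calc (C * E / r) ^ 2 = C * (C * E ^ 2) / r ^ 2 := by ring
    _ ≤ C * (r * F) / r ^ 2 := by gcongr
    _ = C * F / r := by field_simp

lemma mul_exp_sq_le_of_le {C r q d t : ℝ} (hC : 0 < C) (hr : 0 < r) (hq : 0 < q)
    (ht : d / 2 + log C / (2 * q) - log r / (2 * q) ≤ t) :
    C * exp (-q * t) ^ 2 ≤ r * exp (-q * d) := by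
  have h2qt : q * d + log C - log r ≤ 2 * q * t := by
    have := mul_le_mul_of_nonneg_left ht (by positivity : (0 : ℝ) ≤ 2 * q)
    rwa [show 2 * q * (d / 2 + log C / (2 * q) - log r / (2 * q)) = q * d + log C - log r by
      field_simp] at this
  calc C * exp (-q * t) ^ 2 = exp (log C + 2 * (-q * t)) := by
        rw [exp_add, exp_log hC, two_mul, exp_add, sq]
    _ ≤ exp (log r + -q * d) := exp_le_exp.mpr (by linarith)
    _ = r * exp (-q * d) := by rw [exp_add, exp_log hr]

theorem cutoff_degree_error_general (C q : ℝ) (d : ℕ)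
    (hC : 0 < C) (hq : 0 < q) :
    (C * Real.exp (-q * (⌈(d : ℝ) / 2 + Real.log C / (2 * q)
          - Real.log (1 - Real.exp (-q)) / (2 * q)⌉ : ℤ)) / (1 - Real.exp (-q))) ^ 2
      ≤ C * Real.exp (-q * d) / (1 - Real.exp (-q)) := by
  have hr : 0 < 1 - exp (-q) := sub_pos.mpr (exp_lt_one_iff.mpr (neg_neg_of_pos hq))
  exact sq_mul_div_le_of_mul_sq_le hC.le hr (mul_exp_sq_le_of_le hC hr hq (Int.le_ceil _))

/-- The cutoff degree d* ≈ d/2 guarantees the square of the degree-d* truncation error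
is at most the degree-d truncation error ε. -/
theorem cutoff_degree_error (c : ℕ → ℝ) (C q : ℝ) (d : ℕ)
    (hC : 0 < C) (hq : 0 < q) (hd : 2 ≤ d)
    (hdecay : ∀ n : ℕ, (d : ℝ) / 2 ≤ n → |c n| ≤ C * Real.exp (-q * n)) :
    (C * Real.exp (-q * (⌈(d : ℝ) / 2 + Real.log C / (2 * q)
          - Real.log (1 - Real.exp (-q)) / (2 * q)⌉ : ℤ)) / (1 - Real.exp (-q))) ^ 2
      ≤ C * Real.exp (-q * d) / (1 - Real.exp (-q)) :=
  cutoff_degree_error_general C q d hC hq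
end
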